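/- If a > a' > 0 are rationals and a = b_0/c_0 > ⋯ > b_n/c_n = a' is a shortest N-path, then for 0 < i < n one has lcm(N, c_i) ≠ lcm(N, c_{i-1}) + lcm(N, c_{i+1}). -/

import Mathlib

/-!
If `lcm(N, cᵢ) = lcm(N, c_{i-1}) + lcm(N, c_{i+1})`, the two steps through `bᵢ/cᵢ` add up
to a single `N`-step, since `N/(AB) + N/(BC) = N(A + C)/(ABC) = N/(AC)` when `B = A + C`.
Deleting `bᵢ/cᵢ` then leaves a shorter `N`-path with the same endpoints.
-/

/-- An `N`-path is a strictly decreasing sequence of rationals (automatically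
in lowest terms, as elements of `ℚ`) such that consecutive entries `x > y`
satisfy `x − y = N / (lcm(N, x.den) · lcm(N, y.den))`. -/
def IsNPath (N : ℕ) (l : List ℚ) : Prop :=
  l.Chain' fun x y => y < x ∧
    x - y = (N : ℚ) / ((Nat.lcm N x.den : ℚ) * (Nat.lcm N y.den : ℚ))

/-- An `N`-path from `a` to `a'`: an `N`-path whose first entry is `a` and
whose last entry is `a'`. -/
def IsNPathFrom (N : ℕ) (a a' : ℚ) (l : List ℚ) : Prop :=
  IsNPath N l ∧ l.head? = some a ∧ l.getLast? = some a'

/-- A shortest `N`-path from `a` to `a'`: an `N`-path from `a` to `a'` such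
that no proper subsequence (containing the endpoints) is an `N`-path from `a`
to `a'`. -/
def IsShortestNPath (N : ℕ) (a a' : ℚ) (l : List ℚ) : Prop :=
  IsNPathFrom N a a' l ∧
    ∀ l' : List ℚ, l'.Sublist l → l' ≠ l → ¬ IsNPathFrom N a a' l'

def IsNStep (N : ℕ) (x y : ℚ) : Prop :=
  y < x ∧ x - y = (N : ℚ) / ((Nat.lcm N x.den : ℚ) * (Nat.lcm N y.den : ℚ))

theorem isNPath_iff_isChain {N : ℕ} {l : List ℚ} : IsNPath N l ↔ l.IsChain (IsNStep N) :=
  Iff.rfl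

namespace IsNStep

variable {N : ℕ} {x y z : ℚ}

theorem ne_zero (h : IsNStep N x y) : N ≠ 0 := by
  rintro rfl
  have := h.2
  simp only [Nat.cast_zero, zero_div, sub_eq_zero] at this
  exact h.1.ne' this

theorem trans_of_lcm_eq_add (hxy : IsNStep N x y) (hyz : IsNStep N y z)
    (hlcm : Nat.lcm N y.den = Nat.lcm N x.den + Nat.lcm N z.den) : IsNStep N x z := by
  have hN := hxy.ne_zero
  have hA : (Nat.lcm N x.den : ℚ) ≠ 0 := by exact_mod_cast Nat.lcm_ne_zero hN x.den_nz
  have hC : (Nat.lcm N z.den : ℚ) ≠ 0 := by exact_mod_cast Nat.lcm_ne_zero hN z.den_nz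
  have hB : (Nat.lcm N y.den : ℚ) = Nat.lcm N x.den + Nat.lcm N z.den := by exact_mod_cast hlcm
  refine ⟨hyz.1.trans hxy.1, ?_⟩
  calc x - z = (x - y) + (y - z) := by ring
    _ = _ := by
      rw [hxy.2, hyz.2, hB]
      have : (Nat.lcm N x.den : ℚ) + Nat.lcm N z.den ≠ 0 := by positivity
      field_simp
      ring

end IsNStep

theorem List.IsChain.erase_middle {α : Type*} {R : α → α → Prop} {l₁ l₂ : List α} {x y z : α}
    (h : (l₁ ++ x :: y :: z :: l₂).IsChain R) (hxz : R x z) :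
    (l₁ ++ x :: z :: l₂).IsChain R := by
  simp only [List.isChain_append_cons_cons, List.isChain_cons_cons] at h ⊢
  exact ⟨h.1, hxz, h.2.2.2⟩

theorem List.eq_take_append_getElem_cons_cons_cons_drop {α : Type*} (l : List α) {i : ℕ}
    (hi0 : 0 < i) (hi1 : i + 1 < l.length) :
    l = l.take (i - 1) ++ l[i - 1] :: l[i] :: l[i + 1] :: l.drop (i + 2) := by
  obtain ⟨j, rfl⟩ : ∃ j, i = j + 1 := ⟨i - 1, by omega⟩
  simp only [Nat.add_sub_cancel, List.getElem_cons_drop, List.take_append_drop]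

namespace IsShortestNPath

variable {N : ℕ} {a a' x y z : ℚ} {l₁ l₂ : List ℚ}

theorem not_isNStep (hl : IsShortestNPath N a a' (l₁ ++ x :: y :: z :: l₂)) :
    ¬ IsNStep N x z := by
  obtain ⟨⟨hpath, hhead, hlast⟩, hmin⟩ := hl
  intro hxz
  refine hmin (l₁ ++ x :: z :: l₂) ?_ ?_ ⟨hpath.erase_middle hxz, ?_, ?_⟩
  · exact (List.sublist_cons_self y (z :: l₂)).cons_cons x |>.append_left l₁
  · intro h
    simpa using congrArg List.length h
  · simpa [List.head?_append] using hhead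
  · simpa [List.getLast?_append] using hlast

theorem lcm_den_ne_add (hl : IsShortestNPath N a a' (l₁ ++ x :: y :: z :: l₂)) :
    Nat.lcm N y.den ≠ Nat.lcm N x.den + Nat.lcm N z.den := by
  intro hlcm
  have hchain := isNPath_iff_isChain.mp hl.1.1
  simp only [List.isChain_append_cons_cons, List.isChain_cons_cons] at hchain
  exact hl.not_isNStep (hchain.2.1.trans_of_lcm_eq_add hchain.2.2.1 hlcm)

end IsShortestNPath

/-- If `a > a' > 0` are rationals and
`a = b₀/c₀ > ⋯ > bₙ/cₙ = a'` is a shortest `N`-path, then for `0 < i < n` one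
has `lcm(N, cᵢ) ≠ lcm(N, c_{i−1}) + lcm(N, c_{i+1})`. -/
theorem stmt12 (N : ℕ) (a a' : ℚ)
    (l : List ℚ) (hl : IsShortestNPath N a a' l)
    (i : ℕ) (hi0 : 0 < i) (hi1 : i + 1 < l.length) :
    Nat.lcm N (l[i]'(by omega)).den ≠
      Nat.lcm N (l[i - 1]'(by omega)).den + Nat.lcm N (l[i + 1]'hi1).den := by
  have hsplit := l.eq_take_append_getElem_cons_cons_cons_drop hi0 hi1
  exact (hsplit ▸ hl : IsShortestNPath N a a' _).lcm_den_ne_add
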